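/- arXiv:1404.5012 — 5 statements merged into one kernel-verified Lean document; each statement's English description precedes it below -/
import Mathlib

section
/- Let C be an F_q-linear subspace of F_q^n. Then for all complex numbers x and y, Σ_{v ∈ C^⊥} x^{n−wt(v)} y^{wt(v)} = (1/|C|) · Σ_{c ∈ C} (x + (q−1)y)^{n−wt(c)} (x − y)^{wt(c)}. -/
/-!
Fix a primitive additive character `ψ` of `F`. The character `c ↦ ψ (v ⬝ᵥ c)` of `C` is trivial
exactly when `v ∈ C^⊥`, so summing it over `C` gives `|C| · 1_{C^⊥}` (Poisson summation). The
weight monomial `x^{n - wt v} y^{wt v}` is a product over the coordinates, so its Fourier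
transform factors into one-dimensional sums, each equal to `x + (q - 1) y` or `x - y` according
as the coordinate of `c` vanishes or not.
-/

open scoped Classical

noncomputable section

/-- Hamming weight of a vector. -/
def wt {F : Type} [Field F] [Fintype F] {n : ℕ} (v : Fin n → F) : ℕ :=
  (Finset.univ.filter fun i => v i ≠ 0).card

open Finset

lemma AddChar.map_sum_eq_prod {A M ι : Type*} [AddCommMonoid A] [CommMonoid M]
    (ψ : AddChar A M) (s : Finset ι) (g : ι → A) : ψ (∑ i ∈ s, g i) = ∏ i ∈ s, ψ (g i) := by
  induction s using Finset.induction with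
  | empty => simp
  | insert a s ha ih => rw [sum_insert ha, prod_insert ha, map_add_eq_mul, ih]

lemma AddChar.exists_isPrimitive_complex (F : Type*) [Field F] [Finite F] :
    ∃ ψ : AddChar F ℂ, ψ.IsPrimitive := by
  obtain ⟨ψ, hψ⟩ := (AddChar.exists_apply_ne_zero (a := (1 : F))).2 one_ne_zero
  exact ⟨ψ, .of_ne_one (AddChar.ne_one_iff.2 ⟨1, hψ⟩)⟩

section Fourier

variable {F : Type} [Field F] [Fintype F] {R : Type*} [CommRing R] [IsDomain R]
  {ψ : AddChar F R}

lemma prod_ite_eq_zero_eq_pow_wt {M : Type*} [CommMonoid M] {n : ℕ} (v : Fin n → F) (X Y : M) :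
    ∏ i, (if v i = 0 then X else Y) = X ^ (n - wt v) * Y ^ wt v := by
  have hcard := card_filter_add_card_filter_not (s := univ) (p := fun i => v i = 0)
  have hwt : #{i | ¬v i = 0} = wt v := rfl
  rw [card_univ, Fintype.card_fin, hwt] at hcard
  rw [prod_ite, prod_const, prod_const, hwt]
  congr 2
  omega

lemma sum_ite_mem_addChar_dotProduct {ι : Type*} [Fintype ι] [DecidableEq ι]
    (hψ : ψ.IsPrimitive) (C : Submodule F (ι → F)) (v : ι → F) :
    ∑ c, (if c ∈ C then ψ (v ⬝ᵥ c) else 0)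
      = if ∀ c ∈ C, v ⬝ᵥ c = 0 then (Nat.card C : R) else 0 := by
  let φ : AddChar C R := ψ.compAddMonoidHom
    (AddMonoidHom.mk' (fun c : C => v ⬝ᵥ c) fun a b => by simp [dotProduct_add])
  have hφ : φ = 0 ↔ ∀ c ∈ C, v ⬝ᵥ c = 0 := by
    refine ⟨fun h c hc => ?_, fun h => AddChar.eq_zero_iff.2 fun c => ?_⟩
    · by_contra hne
      obtain ⟨s, hs⟩ := AddChar.ne_one_iff.1 (hψ hne)
      apply hs
      have := AddChar.eq_zero_iff.1 h ⟨s • c, C.smul_mem s hc⟩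
      simpa [φ, dotProduct_smul, mul_comm] using this
    · simp [φ, h c c.2]
  rw [← sum_filter, sum_subtype (p := (· ∈ C)) _ (fun c => by simp) (fun c => ψ (v ⬝ᵥ c)),
    Nat.card_eq_fintype_card]
  exact (AddChar.sum_eq_ite φ).trans (if_congr hφ rfl rfl)

/- The `DecidableEq ι` binder (rather than `open scoped Classical`) makes the `Fintype (ι → F)`
instance agree syntactically with the one on `Fin n → F` used in `stmt2`. -/
theorem sum_dual_mul_card_eq_sum_fourier {ι : Type*} [Fintype ι] [DecidableEq ι]
    (hψ : ψ.IsPrimitive) (C : Submodule F (ι → F)) (f : (ι → F) → R) :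
    (∑ v, if ∀ c ∈ C, v ⬝ᵥ c = 0 then f v else 0) * Nat.card C
      = ∑ c, if c ∈ C then ∑ v, ψ (v ⬝ᵥ c) * f v else 0 := by
  calc (∑ v, if ∀ c ∈ C, v ⬝ᵥ c = 0 then f v else 0) * Nat.card C
      = ∑ v, ∑ c, (if c ∈ C then ψ (v ⬝ᵥ c) else 0) * f v := by
        rw [sum_mul]
        refine sum_congr rfl fun v _ => ?_
        rw [← sum_mul, sum_ite_mem_addChar_dotProduct hψ, ite_mul, ite_mul, zero_mul, zero_mul,
          mul_comm (f v)]
    _ = ∑ c, ∑ v, (if c ∈ C then ψ (v ⬝ᵥ c) else 0) * f v := sum_comm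
    _ = ∑ c, if c ∈ C then ∑ v, ψ (v ⬝ᵥ c) * f v else 0 := by
        refine sum_congr rfl fun c _ => ?_
        split_ifs <;> simp

lemma sum_addChar_mul_ite_eq_zero (hψ : ψ.IsPrimitive) (b : F) (X Y : R) :
    ∑ a, ψ (a * b) * (if a = 0 then X else Y)
      = if b = 0 then X + (Fintype.card F - 1) * Y else X - Y := by
  have hsplit : ∀ a : F, (if a = 0 then X else Y) = (if a = 0 then X - Y else 0) + Y := by
    intro a; split_ifs <;> ring
  simp_rw [hsplit, mul_add, sum_add_distrib, ← sum_mul, AddChar.sum_mulShift b hψ]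
  rw [sum_eq_single_of_mem 0 (mem_univ _) fun a _ ha => by rw [if_neg ha, mul_zero],
    if_pos rfl, zero_mul, AddChar.map_zero_eq_one, one_mul]
  split_ifs <;> push_cast <;> ring

lemma sum_addChar_dotProduct_mul_pow_wt (hψ : ψ.IsPrimitive) {n : ℕ} (c : Fin n → F) (X Y : R) :
    ∑ v : Fin n → F, ψ (v ⬝ᵥ c) * (X ^ (n - wt v) * Y ^ wt v)
      = (X + (Fintype.card F - 1) * Y) ^ (n - wt c) * (X - Y) ^ wt c := by
  calc ∑ v : Fin n → F, ψ (v ⬝ᵥ c) * (X ^ (n - wt v) * Y ^ wt v)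
      = ∑ v : Fin n → F, ∏ i, ψ (v i * c i) * (if v i = 0 then X else Y) := by
        refine sum_congr rfl fun v _ => ?_
        rw [prod_mul_distrib, dotProduct, AddChar.map_sum_eq_prod, prod_ite_eq_zero_eq_pow_wt]
    _ = ∏ i, ∑ a, ψ (a * c i) * (if a = 0 then X else Y) := by rw [Fintype.prod_sum]
    _ = ∏ i, if c i = 0 then X + (Fintype.card F - 1) * Y else X - Y :=
        prod_congr rfl fun i _ => sum_addChar_mul_ite_eq_zero hψ (c i) X Y
    _ = _ := prod_ite_eq_zero_eq_pow_wt c _ _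

end Fourier

theorem stmt2 (q : ℕ) (F : Type) [Field F] [Fintype F] (hq : Fintype.card F = q)
    (n : ℕ) (C : Submodule F (Fin n → F)) (x y : ℂ) :
    ∑ v : Fin n → F, (if (∀ c ∈ C, ∑ i, v i * c i = 0) then
        x ^ (n - wt v) * y ^ wt v else 0)
      = (1 / (Nat.card C : ℂ)) *
          ∑ c : Fin n → F, (if c ∈ C then
            (x + ((q : ℂ) - 1) * y) ^ (n - wt c) * (x - y) ^ wt c else 0) := by
  obtain ⟨ψ, hψ⟩ := AddChar.exists_isPrimitive_complex F
  have hC : (Nat.card C : ℂ) ≠ 0 := Nat.cast_ne_zero.2 Nat.card_pos.ne'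
  rw [one_div, inv_mul_eq_div, eq_div_iff hC]
  have hpoisson := sum_dual_mul_card_eq_sum_fourier hψ C fun v => x ^ (n - wt v) * y ^ wt v
  simp only [sum_addChar_dotProduct_mul_pow_wt hψ, hq] at hpoisson
  exact hpoisson

end
end

section
/- Let C be an F_q-linear subspace of F_q^k × F_q^{n−k}, where the first k coordinates are the information symbols of C and the last n−k coordinates are its parity symbols (for the dual code C^⊥ the roles of the two blocks are interchanged). Define g^{IP}_C(x_I,y_I,x_P,y_P) = Σ_{(c₁,c₂) ∈ C} x_I^{k−wt(c₁)} y_I^{wt(c₁)} x_P^{(n−k)−wt(c₂)} y_P^{wt(c₂)} and g^{IP}_{C^⊥}(x_I,y_I,x_P,y_P) = Σ_{(v₁,v₂) ∈ C^⊥} x_P^{k−wt(v₁)} y_P^{wt(v₁)} x_I^{(n−k)−wt(v₂)} y_I^{wt(v₂)}. Then for all complex numbers x_I, y_I, x_P, y_P: g^{IP}_{C^⊥}(x_I,y_I,x_P,y_P) = (1/|C|) · g^{IP}_C(x_P+(q−1)y_P, x_P−y_P, x_I+(q−1)y_I, x_I−y_I). -/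
/-!
STATEMENT 3: MacWilliams identity for input-parity weight generating functions.
`C ⊆ F_q^k × F_q^{n−k}` (information block of length `k`, parity block of
length `n−k`; for `C^⊥` the roles are interchanged):
`g^{IP}_{C^⊥}(x_I,y_I,x_P,y_P) = (1/|C|) g^{IP}_C(x_P+(q−1)y_P, x_P−y_P, x_I+(q−1)y_I, x_I−y_I)`.
-/

open scoped Classical

noncomputable section

variable {F : Type} [Field F] [Fintype F]

namespace MacWAux

variable {F : Type} [Field F] [Fintype F]

lemma addchar_sum {A : Type*} [AddCommMonoid A] (χ : AddChar A ℂ) {ι : Type*} (s : Finset ι)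
    (g : ι → A) : χ (∑ i ∈ s, g i) = ∏ i ∈ s, χ (g i) := by
  induction s using Finset.cons_induction with
  | empty => simp
  | cons a s ha ih => rw [Finset.sum_cons, Finset.prod_cons, AddChar.map_add_eq_mul, ih]

lemma card_zero {m : ℕ} (v : Fin m → F) :
    (Finset.univ.filter fun i => v i = 0).card = m - wt v := by
  have h := Finset.card_filter_add_card_filter_not (s := Finset.univ)
    (p := fun i : Fin m => v i ≠ 0)
  simp only [not_not, Finset.card_univ, Fintype.card_fin] at h
  unfold wt
  omega

lemma prod_ite {m : ℕ} (v : Fin m → F) (A B : ℂ) :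
    (∏ i, if v i = 0 then A else B) = A ^ (m - wt v) * B ^ wt v := by
  rw [Finset.prod_ite, Finset.prod_const, Finset.prod_const, card_zero]
  rfl

lemma coord (q : ℕ) (hq : Fintype.card F = q) (χ : AddChar F ℂ) (hχ : χ ≠ 1)
    (c : F) (a b : ℂ) :
    (∑ t : F, χ (t * c) * (if t = 0 then a else b))
      = if c = 0 then a + ((q : ℂ) - 1) * b else a - b := by
  have h0 : (0 : F) ∈ Finset.univ := Finset.mem_univ _
  rw [← Finset.sum_erase_add _ _ h0]
  simp only [zero_mul, AddChar.map_zero_eq_one, if_pos rfl, one_mul]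
  have herase : ∀ t ∈ Finset.univ.erase (0 : F),
      χ (t * c) * (if t = 0 then a else b) = χ (t * c) * b := by
    intro t ht
    rw [if_neg (Finset.mem_erase.1 ht).1]
  rw [Finset.sum_congr rfl herase]
  by_cases hc : c = 0
  · subst hc
    simp only [mul_zero, AddChar.map_zero_eq_one, one_mul, Finset.sum_const, if_pos rfl]
    rw [Finset.card_erase_of_mem h0, Finset.card_univ, hq]
    have hq1 : 1 ≤ q := by
      have := Fintype.card_pos (α := F); omega
    rw [nsmul_eq_mul, Nat.cast_sub hq1]
    simp only [if_true]
    ring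
  · rw [if_neg hc, ← Finset.sum_mul]
    have hbij : ∑ t ∈ Finset.univ.erase (0 : F), χ (t * c) =
        ∑ s ∈ Finset.univ.erase (0 : F), χ s := by
      apply Finset.sum_nbij' (i := fun t => t * c) (j := fun s => s * c⁻¹)
      · intro t ht
        simp only [Finset.mem_erase, Finset.mem_univ, and_true] at ht ⊢
        exact mul_ne_zero ht hc
      · intro s hs
        simp only [Finset.mem_erase, Finset.mem_univ, and_true] at hs ⊢
        exact mul_ne_zero hs (inv_ne_zero hc)
      · intro t _; field_simp
      · intro s _; field_simp
      · intro t _; rfl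
    rw [hbij]
    have hsum : ∑ s : F, χ s = 0 := by
      rw [AddChar.sum_eq_zero_iff_ne_zero]
      rw [← AddChar.one_eq_zero]
      exact hχ
    have : ∑ s ∈ Finset.univ.erase (0 : F), χ s = (∑ s : F, χ s) - χ 0 :=
      Finset.sum_erase_eq_sub h0
    rw [this, hsum, AddChar.map_zero_eq_one]
    simp only [if_true]
    ring

lemma block (q : ℕ) (hq : Fintype.card F = q) (χ : AddChar F ℂ) (hχ : χ ≠ 1)
    (m : ℕ) (c : Fin m → F) (a b : ℂ) :
    (∑ v : Fin m → F, χ (∑ i, v i * c i) * (a ^ (m - wt v) * b ^ wt v))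
      = (a + ((q : ℂ) - 1) * b) ^ (m - wt c) * (a - b) ^ wt c := by
  have step1 : ∀ v : Fin m → F,
      χ (∑ i, v i * c i) * (a ^ (m - wt v) * b ^ wt v)
        = ∏ i, (χ (v i * c i) * (if v i = 0 then a else b)) := by
    intro v
    rw [Finset.prod_mul_distrib, ← addchar_sum, prod_ite]
  rw [Finset.sum_congr rfl (fun v _ => step1 v)]
  rw [← Fintype.prod_sum (f := fun i t => χ (t * c i) * (if t = 0 then a else b))]
  rw [Finset.prod_congr rfl (fun i _ => coord q hq χ hχ (c i) a b)]
  exact prod_ite c _ _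

lemma indicator {n k : ℕ} (C : Submodule F ((Fin k → F) × (Fin (n - k) → F)))
    (χ : AddChar F ℂ) (hχ : χ ≠ 1) (v : (Fin k → F) × (Fin (n - k) → F)) :
    (∑ c : C, χ ((∑ i, v.1 i * (c : (Fin k → F) × (Fin (n - k) → F)).1 i)
        + ∑ j, v.2 j * (c : (Fin k → F) × (Fin (n - k) → F)).2 j))
      = if (∀ c ∈ C, (∑ i, v.1 i * c.1 i) + (∑ j, v.2 j * c.2 j) = 0) then
          (Nat.card C : ℂ) else 0 := by
  classical
  set B : ((Fin k → F) × (Fin (n - k) → F)) → F :=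
    fun c => (∑ i, v.1 i * c.1 i) + ∑ j, v.2 j * c.2 j with hB
  have hBadd : ∀ c d, B (c + d) = B c + B d := by
    intro c d
    simp only [hB, Prod.fst_add, Prod.snd_add, Pi.add_apply, mul_add, Finset.sum_add_distrib]
    ring
  have hBsmul : ∀ (s : F) c, B (s • c) = s * B c := by
    intro s c
    simp only [hB, Prod.smul_fst, Prod.smul_snd, Pi.smul_apply, smul_eq_mul, Finset.mul_sum,
      mul_add]
    congr 1 <;> exact Finset.sum_congr rfl (fun i _ => by ring)
  let φ : ↥C →+ F :=
    { toFun := fun c => B (c : (Fin k → F) × (Fin (n - k) → F))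
      map_zero' := by simp [hB]
      map_add' := fun c d => by
        simpa using hBadd (c : (Fin k → F) × (Fin (n - k) → F)) d }
  set ψ : AddChar ↥C ℂ := χ.compAddMonoidHom φ with hψdef
  have hψ : (∑ c : C, χ (B (c : (Fin k → F) × (Fin (n - k) → F)))) = ∑ c : C, ψ c := rfl
  rw [hψ, AddChar.sum_eq_ite ψ]
  have hiff : ψ = 0 ↔ ∀ c ∈ C, B c = 0 := by
    constructor
    · intro h0
      by_contra hcon
      push_neg at hcon
      obtain ⟨c₀, hc₀C, hc₀⟩ := hcon
      obtain ⟨u, hu⟩ := AddChar.ne_one_iff.1 hχ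
      have hs : B ((u * (B c₀)⁻¹) • c₀) = u := by
        rw [hBsmul]; field_simp
      have hval : ψ ⟨(u * (B c₀)⁻¹) • c₀, C.smul_mem _ hc₀C⟩ = χ u := by
        simp only [hψdef, AddChar.compAddMonoidHom_apply]
        show χ (B ((u * (B c₀)⁻¹) • c₀)) = χ u
        rw [hs]
      rw [h0, AddChar.zero_apply] at hval
      exact hu hval.symm
    · intro hP
      apply DFunLike.ext
      intro c
      have hc : B (c : (Fin k → F) × (Fin (n - k) → F)) = 0 := hP _ c.2
      show χ (B (c : (Fin k → F) × (Fin (n - k) → F))) = 1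
      rw [hc, AddChar.map_zero_eq_one]
  by_cases hP : ∀ c ∈ C, B c = 0
  · rw [if_pos (hiff.2 hP), if_pos hP, Nat.card_eq_fintype_card]
  · rw [if_neg (fun h => hP (hiff.1 h)), if_neg hP]

end MacWAux

theorem stmt3 (q : ℕ) (F : Type) [Field F] [Fintype F] (hq : Fintype.card F = q)
    (n k : ℕ) (C : Submodule F ((Fin k → F) × (Fin (n - k) → F)))
    (xI yI xP yP : ℂ) :
    -- `g^{IP}_{C^⊥}(x_I,y_I,x_P,y_P)`
    (∑ v : (Fin k → F) × (Fin (n - k) → F),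
        if (∀ c ∈ C, (∑ i, v.1 i * c.1 i) + (∑ j, v.2 j * c.2 j) = 0) then
          xP ^ (k - wt v.1) * yP ^ wt v.1 * xI ^ ((n - k) - wt v.2) * yI ^ wt v.2
        else 0)
      = (1 / (Nat.card C : ℂ)) *
          -- `g^{IP}_C(x_P+(q−1)y_P, x_P−y_P, x_I+(q−1)y_I, x_I−y_I)`
          ∑ c : (Fin k → F) × (Fin (n - k) → F),
            (if c ∈ C then
              (xP + ((q : ℂ) - 1) * yP) ^ (k - wt c.1) * (xP - yP) ^ wt c.1 *
                (xI + ((q : ℂ) - 1) * yI) ^ ((n - k) - wt c.2) * (xI - yI) ^ wt c.2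
            else 0) := by
  classical
  obtain ⟨χ, hχu⟩ := AddChar.exists_apply_ne_zero.2 (one_ne_zero : (1 : F) ≠ 0)
  have hχ : χ ≠ 1 := AddChar.ne_one_iff.2 ⟨1, hχu⟩
  have hcard0 : (Nat.card C : ℂ) ≠ 0 := by
    have : 0 < Nat.card C := Nat.card_pos
    exact_mod_cast this.ne'
  set N := (Fin k → F) × (Fin (n - k) → F) with hN
  set f : N → ℂ := fun v =>
    xP ^ (k - wt v.1) * yP ^ wt v.1 * xI ^ ((n - k) - wt v.2) * yI ^ wt v.2 with hf
  have key : ∀ v : N,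
      (if (∀ c ∈ C, (∑ i, v.1 i * c.1 i) + (∑ j, v.2 j * c.2 j) = 0) then f v else 0)
        = (Nat.card C : ℂ)⁻¹ *
            ∑ c : C, χ ((∑ i, v.1 i * (c : N).1 i) + ∑ j, v.2 j * (c : N).2 j) * f v := by
    intro v
    rw [← Finset.sum_mul, MacWAux.indicator C χ hχ v]
    split_ifs with h
    · rw [inv_mul_cancel_left₀ hcard0]
    · simp
  rw [Finset.sum_congr rfl (fun v _ => key v), ← Finset.mul_sum, Finset.sum_comm]
  have T : ∀ c : N,
      (∑ v : N, χ ((∑ i, v.1 i * c.1 i) + ∑ j, v.2 j * c.2 j) * f v)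
        = (xP + ((q : ℂ) - 1) * yP) ^ (k - wt c.1) * (xP - yP) ^ wt c.1 *
            (xI + ((q : ℂ) - 1) * yI) ^ ((n - k) - wt c.2) * (xI - yI) ^ wt c.2 := by
    intro c
    rw [Fintype.sum_prod_type]
    have hterm : ∀ (v1 : Fin k → F) (v2 : Fin (n - k) → F),
        χ ((∑ i, v1 i * c.1 i) + ∑ j, v2 j * c.2 j) * f (v1, v2)
          = (χ (∑ i, v1 i * c.1 i) * (xP ^ (k - wt v1) * yP ^ wt v1)) *
              (χ (∑ j, v2 j * c.2 j) * (xI ^ ((n - k) - wt v2) * yI ^ wt v2)) := by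
      intro v1 v2
      rw [AddChar.map_add_eq_mul, hf]
      ring
    calc (∑ v1 : Fin k → F, ∑ v2 : Fin (n - k) → F,
            χ ((∑ i, v1 i * c.1 i) + ∑ j, v2 j * c.2 j) * f (v1, v2))
        = (∑ v1 : Fin k → F, χ (∑ i, v1 i * c.1 i) * (xP ^ (k - wt v1) * yP ^ wt v1)) *
            (∑ v2 : Fin (n - k) → F,
              χ (∑ j, v2 j * c.2 j) * (xI ^ ((n - k) - wt v2) * yI ^ wt v2)) := by
          rw [Finset.sum_mul_sum]
          exact Finset.sum_congr rfl fun v1 _ => Finset.sum_congr rfl fun v2 _ => hterm v1 v2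
      _ = _ := by
          rw [MacWAux.block q hq χ hχ k c.1 xP yP, MacWAux.block q hq χ hχ (n - k) c.2 xI yI]
          ring
  have hsub : (∑ c : N, if c ∈ C then
        (xP + ((q : ℂ) - 1) * yP) ^ (k - wt c.1) * (xP - yP) ^ wt c.1 *
          (xI + ((q : ℂ) - 1) * yI) ^ ((n - k) - wt c.2) * (xI - yI) ^ wt c.2 else 0)
      = ∑ c : C,
        (xP + ((q : ℂ) - 1) * yP) ^ (k - wt (c : N).1) * (xP - yP) ^ wt (c : N).1 *
          (xI + ((q : ℂ) - 1) * yI) ^ ((n - k) - wt (c : N).2) * (xI - yI) ^ wt (c : N).2 := by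
    rw [← Finset.sum_filter]
    exact Finset.sum_subtype _ (fun x => by simp) _
  rw [one_div, hsub]
  congr 1
  exact Finset.sum_congr rfl fun y _ => T (y : N)
end
end

section
/- Let K be a field and m, n, k, k' natural numbers. Let A, A' be m×m matrices, B a k×m matrix, B' a k'×m matrix, C, C' m×n matrices, E a k×n matrix, and E' a k'×n matrix over K, satisfying: I_m + C C'ᵀ − A A'ᵀ = 0, E E'ᵀ − B B'ᵀ = 0, C E'ᵀ − A B'ᵀ = 0, and E C'ᵀ − B A'ᵀ = 0. Let d ∈ K be nonzero and suppose that the matrices d⁻¹ I_m − A and d I_m − A' are invertible. Then (B (d⁻¹ I_m − A)⁻¹ C + E) · (B' (d I_m − A')⁻¹ C' + E')ᵀ = 0 (the zero k×k' matrix). (Taking K to be the field of rational functions over F_q and d = D, this says G(D) H(D⁻¹)ᵀ = 0 for the polynomial generator matrices of a convolutional code and its dual arising from orthogonal seed transformation matrices.) -/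
/-!
STATEMENT 9: If the seed-transformation blocks satisfy the four orthogonality
relations, then `(B(d⁻¹I−A)⁻¹C + E)·(B'(dI−A')⁻¹C' + E')ᵀ = 0`, i.e.
`G(D) H(D⁻¹)ᵀ = 0`.
-/

open Matrix

noncomputable section

theorem stmt9 (K : Type) [Field K] (m n k k' : ℕ)
    (A A' : Matrix (Fin m) (Fin m) K)
    (B : Matrix (Fin k) (Fin m) K) (B' : Matrix (Fin k') (Fin m) K)
    (C C' : Matrix (Fin m) (Fin n) K)
    (E : Matrix (Fin k) (Fin n) K) (E' : Matrix (Fin k') (Fin n) K)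
    (h1 : 1 + C * C'ᵀ - A * A'ᵀ = 0)
    (h2 : E * E'ᵀ - B * B'ᵀ = 0)
    (h3 : C * E'ᵀ - A * B'ᵀ = 0)
    (h4 : E * C'ᵀ - B * A'ᵀ = 0)
    (d : K) (hd : d ≠ 0)
    (hA : IsUnit (d⁻¹ • (1 : Matrix (Fin m) (Fin m) K) - A))
    (hA' : IsUnit (d • (1 : Matrix (Fin m) (Fin m) K) - A')) :
    (B * (d⁻¹ • (1 : Matrix (Fin m) (Fin m) K) - A)⁻¹ * C + E) *
        (B' * (d • (1 : Matrix (Fin m) (Fin m) K) - A')⁻¹ * C' + E')ᵀ = 0 := by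
  set X : Matrix (Fin m) (Fin m) K := d⁻¹ • 1 - A with hXdef
  set Y : Matrix (Fin m) (Fin m) K := d • 1 - A' with hYdef
  clear_value X Y
  have hc1 : C * C'ᵀ = A * A'ᵀ - 1 := by
    have := h1; linear_combination (norm := abel) h1
  have hc2 : E * E'ᵀ = B * B'ᵀ := by linear_combination (norm := abel) h2
  have hc3 : C * E'ᵀ = A * B'ᵀ := by linear_combination (norm := abel) h3
  have hc4 : E * C'ᵀ = B * A'ᵀ := by linear_combination (norm := abel) h4
  have hYT : Yᵀ = d • 1 - A'ᵀ := by
    rw [hYdef, transpose_sub, transpose_smul, transpose_one]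
  have hXu : X⁻¹ * X = 1 := nonsing_inv_mul X ((isUnit_iff_isUnit_det X).mp hA)
  have hYu : Yᵀ * (Yᵀ)⁻¹ = 1 := by
    refine mul_nonsing_inv _ ?_
    rw [det_transpose]
    exact (isUnit_iff_isUnit_det Y).mp hA'
  have hYdet : IsUnit Y.det := (isUnit_iff_isUnit_det Y).mp hA'
  -- inner algebraic identity
  have hM : (A * A'ᵀ - 1) + A * Yᵀ + X * A'ᵀ + X * Yᵀ = 0 := by
    rw [hXdef, hYT]
    rw [sub_mul, sub_mul, mul_sub, mul_sub, smul_mul_assoc, smul_mul_assoc,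
      mul_smul_comm, mul_smul_comm, smul_smul, inv_mul_cancel₀ hd, one_mul, mul_one, one_smul]
    abel_nf
    simp
  have e1 : X⁻¹ * (A * Yᵀ) * (Yᵀ)⁻¹ = X⁻¹ * A := by
    rw [← mul_assoc, mul_assoc, hYu, mul_one]
  have e2 : X⁻¹ * (X * A'ᵀ) * (Yᵀ)⁻¹ = A'ᵀ * (Yᵀ)⁻¹ := by
    rw [← mul_assoc, hXu, one_mul]
  have e3 : X⁻¹ * (X * Yᵀ) * (Yᵀ)⁻¹ = 1 := by
    rw [← mul_assoc, hXu, one_mul, hYu]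
  have key : X⁻¹ * (A * A'ᵀ - 1) * (Yᵀ)⁻¹ + X⁻¹ * A + A'ᵀ * (Yᵀ)⁻¹ + 1 = 0 := by
    have h0 : X⁻¹ * ((A * A'ᵀ - 1) + A * Yᵀ + X * A'ᵀ + X * Yᵀ) * (Yᵀ)⁻¹ = 0 := by
      rw [hM]; simp
    rw [mul_add, mul_add, mul_add, add_mul, add_mul, add_mul, e1, e2, e3] at h0
    exact h0
  -- rewrite the transpose
  have hT : (B' * Y⁻¹ * C' + E')ᵀ = C'ᵀ * (Yᵀ)⁻¹ * B'ᵀ + E'ᵀ := by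
    rw [transpose_add, transpose_mul, transpose_mul, transpose_nonsing_inv, ← Matrix.mul_assoc]
  rw [hT]
  have expand : (B * X⁻¹ * C + E) * (C'ᵀ * (Yᵀ)⁻¹ * B'ᵀ + E'ᵀ)
      = B * (X⁻¹ * (C * C'ᵀ) * (Yᵀ)⁻¹) * B'ᵀ + B * (X⁻¹ * (C * E'ᵀ))
        + E * C'ᵀ * ((Yᵀ)⁻¹ * B'ᵀ) + E * E'ᵀ := by
    simp only [Matrix.mul_add, Matrix.add_mul, Matrix.mul_assoc]
    abel
  rw [expand, hc1, hc2, hc3, hc4]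
  have gather : B * (X⁻¹ * (A * A'ᵀ - 1) * (Yᵀ)⁻¹) * B'ᵀ + B * (X⁻¹ * (A * B'ᵀ))
        + B * A'ᵀ * ((Yᵀ)⁻¹ * B'ᵀ) + B * B'ᵀ
      = B * (X⁻¹ * (A * A'ᵀ - 1) * (Yᵀ)⁻¹ + X⁻¹ * A + A'ᵀ * (Yᵀ)⁻¹ + 1) * B'ᵀ := by
    simp only [Matrix.mul_add, Matrix.add_mul, Matrix.mul_assoc, Matrix.mul_one, Matrix.one_mul]
    try abel
  rw [gather, key]
  simp
end
end

section
/- Let R be a commutative ring, S a finite type, M an S×S matrix over R, and s₀ ∈ S. Let E be the S×S matrix over R whose (s₀,s₀) entry is 1 and all other entries are 0. In R[[D]], define W to be the (s₀,s₀) entry of (I − D·M)⁻¹ and W_f to be the (s₀,s₀) entry of (I − D·(M − E))⁻¹. Then 1 + D·W and 1 − D·W_f are units of R[[D]], and W_f · (1 + D·W) = W and W · (1 − D·W_f) = W_f; equivalently, W_f = W/(1 + W·D) and W = W_f/(1 − W_f·D). (Here W is the total weight generating function W_C(y,D) of a convolutional code and W_f is the free-distance generating function W_{C_free}(y,D) of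 its fundamental paths, upon taking R = ℂ[y] and M the weight adjacency matrix Λ(y).) -/
/-!
Write `A = I − D·M` and `B = I − D·(M − E)`, so that `B − A = D·E`. The resolvent identity
`A⁻¹ − B⁻¹ = A⁻¹ (B − A) B⁻¹ = D · A⁻¹ E B⁻¹` read at the entry `(s₀,s₀)`, where `E` only
sees the `s₀`-th column of `A⁻¹` and row of `B⁻¹`, gives `W − W_f = D·W·W_f`; both claimed
identities are rearrangements of this. The units have constant coefficient `1`.
-/

noncomputable section

/-- The matrix `I − D·N` over `R[[D]]` associated with a matrix `N` over `R`. -/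
def oneSubDM (R : Type) [CommRing R] (S : Type) [Fintype S] [DecidableEq S]
    (N : Matrix S S R) : Matrix S S (PowerSeries R) :=
  1 - (PowerSeries.X : PowerSeries R) • N.map (PowerSeries.C : R →+* PowerSeries R)

/-- `W`: the `(s₀,s₀)` entry of `(I − D·M)⁻¹`. -/
def Wtot (R : Type) [CommRing R] (S : Type) [Fintype S] [DecidableEq S]
    (M : Matrix S S R) (s₀ : S) : PowerSeries R :=
  (oneSubDM R S M)⁻¹ s₀ s₀

/-- `W_f`: the `(s₀,s₀)` entry of `(I − D·(M − E))⁻¹`. -/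
def Wfree (R : Type) [CommRing R] (S : Type) [Fintype S] [DecidableEq S]
    (M : Matrix S S R) (s₀ : S) : PowerSeries R :=
  (oneSubDM R S (M - Matrix.single s₀ s₀ 1))⁻¹ s₀ s₀

theorem PowerSeries.isUnit_one_add_X_mul {R : Type*} [CommRing R] (f : PowerSeries R) :
    IsUnit (1 + X * f) := by
  simp [isUnit_iff_constantCoeff]

theorem Matrix.mul_single_mul_apply {l m n o α : Type*} [Fintype m] [Fintype n]
    [DecidableEq m] [DecidableEq n] [Semiring α]
    (P : Matrix l m α) (Q : Matrix n o α) (i : m) (j : n) (a : l) (b : o) (c : α) :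
    (P * Matrix.single i j c * Q) a b = P a i * c * Q j b := by
  rw [Matrix.mul_apply, Finset.sum_eq_single j]
  · rw [Matrix.mul_single_apply_same]
  · intro k _ hk
    rw [Matrix.mul_single_apply_of_ne _ _ _ _ _ hk, zero_mul]
  · exact fun h => absurd (Finset.mem_univ j) h

section oneSubDM

variable {R : Type} [CommRing R] {S : Type} [Fintype S] [DecidableEq S]

theorem isUnit_oneSubDM (N : Matrix S S R) : IsUnit (oneSubDM R S N) := by
  have hconst : PowerSeries.constantCoeff.mapMatrix (oneSubDM R S N) = 1 := by
    ext i j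
    simp [oneSubDM, Matrix.one_apply]
  rw [Matrix.isUnit_iff_isUnit_det, PowerSeries.isUnit_iff_constantCoeff, RingHom.map_det,
    hconst, Matrix.det_one]
  exact isUnit_one

theorem oneSubDM_sub_sub_oneSubDM (M N : Matrix S S R) :
    oneSubDM R S (M - N) - oneSubDM R S M =
      (PowerSeries.X : PowerSeries R) • N.map PowerSeries.C := by
  rw [oneSubDM, oneSubDM, Matrix.map_sub _ (map_sub _), smul_sub]
  abel

theorem Wtot_sub_Wfree (M : Matrix S S R) (s₀ : S) :
    Wtot R S M s₀ - Wfree R S M s₀ = PowerSeries.X * (Wtot R S M s₀ * Wfree R S M s₀) := by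
  have resolvent := Matrix.inv_sub_inv
    (iff_of_true (isUnit_oneSubDM M) (isUnit_oneSubDM (M - Matrix.single s₀ s₀ 1)))
  rw [oneSubDM_sub_sub_oneSubDM, Matrix.map_single, map_one, Matrix.mul_smul, Matrix.smul_mul]
    at resolvent
  have entry := congrFun (congrFun resolvent s₀) s₀
  rwa [Matrix.sub_apply, Matrix.smul_apply, Matrix.mul_single_mul_apply, mul_one, smul_eq_mul]
    at entry

end oneSubDM

theorem stmt14 (R : Type) [CommRing R] (S : Type) [Fintype S] [DecidableEq S]
    (M : Matrix S S R) (s₀ : S) :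
    IsUnit (1 + PowerSeries.X * Wtot R S M s₀)
      ∧ IsUnit (1 - PowerSeries.X * Wfree R S M s₀)
      ∧ Wfree R S M s₀ * (1 + PowerSeries.X * Wtot R S M s₀) = Wtot R S M s₀
      ∧ Wtot R S M s₀ * (1 - PowerSeries.X * Wfree R S M s₀) = Wfree R S M s₀ := by
  have key := Wtot_sub_Wfree M s₀
  refine ⟨PowerSeries.isUnit_one_add_X_mul _, ?_, by linear_combination -key,
    by linear_combination key⟩
  simpa only [sub_eq_add_neg, mul_neg] using PowerSeries.isUnit_one_add_X_mul (-Wfree R S M s₀)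
end
end

section
/- Let C be an additive subgroup (F₂-subspace) of V^m × V^n × V^m with |C| = 4^{m+k}·2^a for natural numbers k and a, and let C^⊥ be its symplectic dual. Then for all complex numbers x and y: Λ_{C^⊥}(x,y) = 4^{−(m+k)}·2^{−a} · F_m · Λ_C(x+3y, x−y) · F_m, as an identity of complex matrices indexed by V^m × V^m. (This is the MacWilliams identity for the weight adjacency matrices of an ((n,k,c,m)) entanglement-assisted quantum convolutional code and its dual; for m = 0 it reduces to the MacWilliams identity for entanglement-assisted quantum error-correcting codes.) -/
/-!
STATEMENT 15: MacWilliams identity for the weight adjacency matrices of an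
`((n,k,c,m))` entanglement-assisted quantum convolutional code and its dual:
for an additive subgroup (`F₂`-subspace) `C ⊆ V^m × V^n × V^m` with
`|C| = 4^{m+k}·2^a` and its symplectic dual `C^⊥`,
`Λ_{C^⊥}(x,y) = 4^{−(m+k)}·2^{−a} · F_m · Λ_C(x+3y, x−y) · F_m`,
where `V = F₂ × F₂` encodes the single-qubit Pauli classes.
-/

open scoped Classical
open Matrix

noncomputable section

/-- `V = F₂ × F₂`, encoding the one-qubit Pauli classes. -/
abbrev V : Type := ZMod 2 × ZMod 2

/-- The symplectic pairing on `V`. -/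
def symp (u v : V) : ZMod 2 := u.1 * v.2 + u.2 * v.1

/-- The symplectic pairing on `V^m × V^n × V^m`. -/
def sympFull {m n : ℕ} (u v : (Fin m → V) × (Fin n → V) × (Fin m → V)) : ZMod 2 :=
  (∑ i, symp (u.1 i) (v.1 i)) + (∑ i, symp (u.2.1 i) (v.2.1 i))
    + (∑ i, symp (u.2.2 i) (v.2.2 i))

/-- Pauli weight of a vector over `V`: the number of components `≠ (0,0)`. -/
def pwt {n : ℕ} (v : Fin n → V) : ℕ := (Finset.univ.filter fun i => v i ≠ 0).card

/-- The weight adjacency matrix `Λ_S(x,y)` of a set `S ⊆ V^m × V^n × V^m`. -/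
def WAM {m n : ℕ} (S : Set ((Fin m → V) × (Fin n → V) × (Fin m → V)))
    (x y : ℂ) : Matrix (Fin m → V) (Fin m → V) ℂ := fun w w' =>
  ∑ pv : Fin n → V, if (w, pv, w') ∈ S then x ^ (n - pwt pv) * y ^ pwt pv else 0

/-- The matrix `F_m` with `(w,w')` entry `(−1)^{⟨w,w'⟩}`. -/
def Fq (m : ℕ) : Matrix (Fin m → V) (Fin m → V) ℂ := fun w w' =>
  (-1 : ℂ) ^ (∑ i, symp (w i) (w' i)).val

noncomputable def chi (t : ZMod 2) : ℂ := (-1 : ℂ) ^ t.val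
lemma zmod2_cases (t : ZMod 2) : t = 0 ∨ t = 1 := by revert t; decide
lemma chi_zero : chi 0 = 1 := rfl
lemma chi_one : chi 1 = -1 := by norm_num [chi, ZMod.val_one]
lemma chi_add (s t : ZMod 2) : chi (s + t) = chi s * chi t := by
  rcases zmod2_cases s with hs|hs <;> rcases zmod2_cases t with ht|ht <;> subst hs <;> subst ht <;>
    simp [chi, ZMod.val_one, show ((1:ZMod 2)+1) = 0 by decide]
lemma zmod2_sum (f : ZMod 2 → ℂ) : ∑ v, f v = f 0 + f 1 := Fin.sum_univ_two f
lemma chi_sum {ι : Type*} (s : Finset ι) (f : ι → ZMod 2) :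
    chi (∑ i ∈ s, f i) = ∏ i ∈ s, chi (f i) := by
  induction s using Finset.cons_induction with
  | empty => simp [chi_zero]
  | cons a s ha ih => rw [Finset.sum_cons, Finset.prod_cons, chi_add, ih]
lemma symp_comm (u v : V) : symp u v = symp v u := by simp [symp]; ring

lemma weight_prod {nn : ℕ} (x y : ℂ) (p : Fin nn → V) :
    (∏ i, if p i = 0 then x else y) = x ^ (nn - pwt p) * y ^ pwt p := by
  rw [Finset.prod_ite, Finset.prod_const, Finset.prod_const]
  have h := Finset.card_filter_add_card_filter_not
    (s := (Finset.univ : Finset (Fin nn))) (p := fun i => p i = 0)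
  have h2 : (Finset.univ.filter fun i => ¬ p i = 0).card = pwt p := by
    rw [pwt]
  simp only [Finset.card_univ, Fintype.card_fin] at h
  rw [h2] at h
  rw [h2, show (Finset.univ.filter fun i => p i = 0).card = nn - pwt p by omega]

lemma coord_sum (q : V) (x y : ℂ) :
    (∑ v : V, chi (symp v q) * (if v = 0 then x else y))
      = if q = 0 then x + 3*y else x - y := by
  obtain ⟨a, b⟩ := q
  rw [Fintype.sum_prod_type]
  rw [zmod2_sum (fun v1 => _), zmod2_sum, zmod2_sum]
  rcases zmod2_cases a with rfl|rfl <;> rcases zmod2_cases b with rfl|rfl <;>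
    simp [symp, chi_zero, chi_one, Prod.ext_iff, Prod.mk.injEq, show ((1:ZMod 2)+1) = 0 by decide] <;> ring
lemma innerSum15 (nn : ℕ) (q : Fin nn → V) (x y : ℂ) :
    (∑ p : Fin nn → V, chi (∑ i, symp (p i) (q i)) * (x ^ (nn - pwt p) * y ^ pwt p))
      = (x + 3*y) ^ (nn - pwt q) * (x - y) ^ pwt q := by
  have h1 : ∀ p : Fin nn → V,
      chi (∑ i, symp (p i) (q i)) * (x ^ (nn - pwt p) * y ^ pwt p)
        = ∏ i, chi (symp (p i) (q i)) * (if p i = 0 then x else y) := by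
    intro p
    rw [Finset.prod_mul_distrib, ← chi_sum, weight_prod]
  simp_rw [h1]
  rw [← Fintype.prod_sum (fun (i : Fin nn) (v : V) => chi (symp v (q i)) * if v = 0 then x else y)]
  have h2 : ∀ i, (∑ v : V, chi (symp v (q i)) * (if v = 0 then x else y))
      = if q i = 0 then x + 3*y else x - y := fun i => coord_sum (q i) x y
  simp_rw [h2]
  rw [weight_prod]

lemma symp_add_right (u a b : V) : symp u (a + b) = symp u a + symp u b := by
  simp [symp]; ring

lemma sympFull_add_right {m n : ℕ} (v c c' : (Fin m → V) × (Fin n → V) × (Fin m → V)) :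
    sympFull v (c + c') = sympFull v c + sympFull v c' := by
  simp only [sympFull, Prod.fst_add, Prod.snd_add, Pi.add_apply, symp_add_right,
    Finset.sum_add_distrib]
  ring

lemma charSum15 {m n : ℕ} (C : Submodule (ZMod 2) ((Fin m → V) × (Fin n → V) × (Fin m → V)))
    (v : (Fin m → V) × (Fin n → V) × (Fin m → V)) :
    (∑ c : C, chi (sympFull v c)) =
      if (∀ c ∈ C, sympFull v c = 0) then (Nat.card C : ℂ) else 0 := by
  split_ifs with h
  · rw [Nat.card_eq_fintype_card]
    rw [Finset.sum_congr rfl fun c _ => by rw [h c c.2, chi_zero]]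
    simp
  · push_neg at h
    obtain ⟨c₀, hc₀C, hc₀⟩ := h
    have h1 : sympFull v c₀ = 1 := (zmod2_cases _).resolve_left hc₀
    set c₀' : C := ⟨c₀, hc₀C⟩
    have key : (∑ c : C, chi (sympFull v ↑(c + c₀'))) = ∑ c : C, chi (sympFull v ↑c) :=
      Fintype.sum_equiv (Equiv.addRight c₀') _ _ (fun c => rfl)
    have h2 : ∀ c : C, chi (sympFull v ↑(c + c₀')) = - chi (sympFull v ↑c) := by
      intro c
      rw [Submodule.coe_add, sympFull_add_right, chi_add, h1, chi_one]
      ring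
    have h3 : -(∑ c : C, chi (sympFull v ↑c)) = ∑ c : C, chi (sympFull v ↑c) := by
      rw [← Finset.sum_neg_distrib, ← key]
      exact Finset.sum_congr rfl fun c _ => (h2 c).symm
    linear_combination (-(1:ℂ)/2) * h3
noncomputable section

lemma Fq_eq_chi (m : ℕ) (w w' : Fin m → V) : Fq m w w' = chi (∑ i, symp (w i) (w' i)) := rfl

def Gfun {m n : ℕ} (w w' : Fin m → V) (x y : ℂ)
    (v : (Fin m → V) × (Fin n → V) × (Fin m → V)) : ℂ :=
  chi (∑ i, symp (w i) (v.1 i)) * ((x + 3*y) ^ (n - pwt v.2.1) * (x - y) ^ pwt v.2.1)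
    * chi (∑ i, symp (w' i) (v.2.2 i))

lemma sum_subtype_C {m n : ℕ} (C : Submodule (ZMod 2) ((Fin m → V) × (Fin n → V) × (Fin m → V)))
    (F : ((Fin m → V) × (Fin n → V) × (Fin m → V)) → ℂ) :
    (∑ c : C, F ↑c) = ∑ v : (Fin m → V) × (Fin n → V) × (Fin m → V), if v ∈ C then F v else 0 := by
  rw [← Finset.sum_filter]
  exact (Finset.sum_subtype _ (by simp) F).symm

theorem stmt15 (m n k a : ℕ)
    (C : Submodule (ZMod 2) ((Fin m → V) × (Fin n → V) × (Fin m → V)))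
    (hC : Nat.card C = 4 ^ (m + k) * 2 ^ a) (x y : ℂ) :
    WAM {v : (Fin m → V) × (Fin n → V) × (Fin m → V) | ∀ c ∈ C, sympFull v c = 0} x y
      = (((4 : ℂ) ^ (m + k) * 2 ^ a)⁻¹) •
          (Fq m * WAM (C : Set ((Fin m → V) × (Fin n → V) × (Fin m → V)))
              (x + 3 * y) (x - y) * Fq m) := by
  classical
  set N : ℂ := ((Nat.card C : ℕ) : ℂ) with hN
  have hNval : N = 4 ^ (m+k) * 2 ^ a := by rw [hN, hC]; push_cast; ring
  have hNne : N ≠ 0 := by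
    rw [hNval]
    exact mul_ne_zero (pow_ne_zero _ (by norm_num)) (pow_ne_zero _ (by norm_num))
  ext w w'
  have hL : WAM {v : (Fin m → V) × (Fin n → V) × (Fin m → V) | ∀ c ∈ C, sympFull v c = 0} x y w w'
      = N⁻¹ * ∑ c : C, Gfun (n := n) w w' x y ↑c := by
    have hGc : ∀ c : C, Gfun (n := n) w w' x y ↑c
        = ∑ p : Fin n → V, chi (sympFull (w, p, w') ↑c) * (x ^ (n - pwt p) * y ^ pwt p) := by
      rintro ⟨⟨u, q, u'⟩, hc⟩
      rw [Gfun]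
      simp only
      rw [← innerSum15 n q x y, Finset.mul_sum, Finset.sum_mul]
      refine Finset.sum_congr rfl fun p _ => ?_
      simp only [sympFull, chi_add, Prod.fst, Prod.snd]
      ring
    have main : (∑ c : C, Gfun (n := n) w w' x y ↑c)
        = N * ∑ p : Fin n → V,
            (if (∀ cc ∈ C, sympFull (w, p, w') cc = 0)
              then x ^ (n - pwt p) * y ^ pwt p else 0) := by
      calc (∑ c : C, Gfun (n := n) w w' x y ↑c)
          = ∑ c : C, ∑ p : Fin n → V,
              chi (sympFull (w, p, w') ↑c) * (x ^ (n - pwt p) * y ^ pwt p) :=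
            Finset.sum_congr rfl fun c _ => hGc c
        _ = ∑ p : Fin n → V, ∑ c : C,
              chi (sympFull (w, p, w') ↑c) * (x ^ (n - pwt p) * y ^ pwt p) := Finset.sum_comm
        _ = ∑ p : Fin n → V,
              (if (∀ cc ∈ C, sympFull (w, p, w') cc = 0) then N else 0)
                * (x ^ (n - pwt p) * y ^ pwt p) :=
            Finset.sum_congr rfl fun p _ => by
              rw [← Finset.sum_mul, charSum15, ← hN]
        _ = N * ∑ p : Fin n → V,
              (if (∀ cc ∈ C, sympFull (w, p, w') cc = 0)
                then x ^ (n - pwt p) * y ^ pwt p else 0) := by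
            rw [Finset.mul_sum]
            refine Finset.sum_congr rfl fun p _ => ?_
            split_ifs with h
            · ring
            · ring
    rw [WAM, main, ← mul_assoc, inv_mul_cancel₀ hNne, one_mul]
    refine Finset.sum_congr rfl fun p _ => ?_
    by_cases h : ∀ c ∈ C, sympFull (w, p, w') c = 0
    · rw [if_pos h,
        if_pos (show (w, p, w') ∈ {v : (Fin m → V) × (Fin n → V) × (Fin m → V) |
          ∀ c ∈ C, sympFull v c = 0} from h)]
    · rw [if_neg h,
        if_neg (show (w, p, w') ∉ {v : (Fin m → V) × (Fin n → V) × (Fin m → V) |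
          ∀ c ∈ C, sympFull v c = 0} from h)]
  rw [hL]
  rw [Matrix.smul_apply, Matrix.mul_apply, smul_eq_mul, ← hNval]
  congr 1
  rw [sum_subtype_C C (Gfun (n := n) w w' x y), Fintype.sum_prod_type]
  simp_rw [Fintype.sum_prod_type]
  simp only [Matrix.mul_apply, WAM, Fq_eq_chi, Finset.sum_mul, Finset.mul_sum, mul_ite, ite_mul,
    mul_zero, zero_mul, SetLike.mem_coe, Set.mem_setOf_eq, Gfun]
  conv_rhs => rw [Finset.sum_comm]
  refine Finset.sum_congr rfl fun u _ => ?_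
  rw [Finset.sum_comm]
  refine Finset.sum_congr rfl fun q _ => Finset.sum_congr rfl fun u' _ => ?_
  split_ifs with h <;>
    first
      | rfl
      | (simp_rw [symp_comm (w' _)]; ring)
      | simp_rw [symp_comm (w' _)]
end
end
end
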